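/- Chern class cocycle of a local Heegner divisor: assume in addition ⟨ℓ,ℓ'⟩ = δ⁻¹, fix λ ∈ V with ⟨λ,ℓ⟩ = 0, and fix ζ ∈ ℂ with Im ζ = |δ|/2. For t ∈ V with ⟨t,ℓ⟩ = ⟨t,ℓ'⟩ = 0 and z ∈ V, define A(t,z) := −2|δ|²·⟨z,λ⟩·Re⟨t,λ⟩ − 2(Re⟨t,λ⟩)²·ζ + Re⟨t,λ⟩·(ζ + 1). Then for all t, t' ∈ W, all τ ∈ ℂ and σ ∈ W, with z = z(τ,σ): A(t+t', z) − A(t, [0,t']z) − A(t', z) = −2|δ|·Re⟨t,λ⟩·Im⟨t',λ⟩ − 4·Re⟨t,λ⟩·Re⟨t',λ⟩·Re ζ. -/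

import Mathlib

open Complex

/-!
Since `⟨ℓ,λ⟩ = 0`, the transformation `[0,t']` changes `⟨z,λ⟩` only by `⟨z,ℓ⟩⟨t',λ⟩`, and
`⟨z,ℓ⟩ = ⟨ℓ',ℓ⟩ = i/|δ|`. After this substitution the cocycle relation is a polynomial identity
in `⟨z,λ⟩`, `Re⟨t,λ⟩`, `⟨t',λ⟩` and `ζ`, which uses `Im ζ = |δ|/2` to cancel the imaginary cross terms.
-/

/-- The Heisenberg transformation `[h,t]`. -/
noncomputable def heis {V : Type*} [AddCommGroup V] [Module ℂ V]
    (B : V →ₗ[ℂ] V →ₛₗ[starRingEnd ℂ] ℂ) (δ : ℂ) (ℓ : V) (h : ℝ) (t : V) (v : V) : V :=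
  v + (B v ℓ) • t - (B v t) • ℓ - ((1 / 2 : ℂ) * B v ℓ * B t t) • ℓ
    - (B v ℓ * δ * (h : ℂ)) • ℓ

/-- The representative vector `z(τ,σ) = ℓ' − δτ⟨ℓ',ℓ⟩ℓ + σ`. -/
noncomputable def zcoord {V : Type*} [AddCommGroup V] [Module ℂ V]
    (B : V →ₗ[ℂ] V →ₛₗ[starRingEnd ℂ] ℂ) (δ : ℂ) (ℓ ℓ' : V) (τ : ℂ) (σ : V) : V :=
  ℓ' - (δ * τ * B ℓ' ℓ) • ℓ + σ

section Pairing

variable {V : Type*} [AddCommGroup V] [Module ℂ V] (B : V →ₗ[ℂ] V →ₛₗ[starRingEnd ℂ] ℂ)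

theorem heis_apply_left {δ : ℂ} {ℓ w : V} (hw : B ℓ w = 0) (h : ℝ) (t v : V) :
    B (heis B δ ℓ h t v) w = B v w + B v ℓ * B t w := by
  simp only [heis, map_add, map_sub, map_smul, LinearMap.add_apply, LinearMap.sub_apply,
    LinearMap.smul_apply, smul_eq_mul, hw, mul_zero, sub_zero]

theorem zcoord_apply_ell {δ τ : ℂ} {ℓ ℓ' σ : V} (hℓ : B ℓ ℓ = 0) (hσ : B σ ℓ = 0) :
    B (zcoord B δ ℓ ℓ' τ σ) ℓ = B ℓ' ℓ := by
  simp only [zcoord, map_add, map_sub, map_smul, LinearMap.add_apply, LinearMap.sub_apply,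
    LinearMap.smul_apply, smul_eq_mul, hℓ, hσ, mul_zero, sub_zero, add_zero]

/-- Since `δ = i|δ|` is purely imaginary, `⟨ℓ',ℓ⟩ = conj δ⁻¹ = -δ⁻¹ = i/|δ|`. -/
theorem apply_swap_eq_I_mul_inv_im (hherm : ∀ v w : V, B w v = starRingEnd ℂ (B v w))
    {δ : ℂ} (hδ : δ.re = 0) {ℓ ℓ' : V} (hℓℓ' : B ℓ ℓ' = δ⁻¹) :
    B ℓ' ℓ = I * (δ.im : ℂ)⁻¹ := by
  have hδI : δ = δ.im * I := by simp [Complex.ext_iff, hδ]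
  rw [hherm, hℓℓ', map_inv₀, hδI, map_mul, conj_ofReal, conj_I]
  simp

end Pairing

/-- The potential `A(t,z)`, written in terms of `c = ⟨z,λ⟩`, `r = Re⟨t,λ⟩` and `d = |δ|`. -/
def chernPotential (d : ℝ) (ζ c : ℂ) (r : ℝ) : ℂ :=
  -2 * (d : ℂ) ^ 2 * c * r - 2 * (r : ℂ) ^ 2 * ζ + r * (ζ + 1)

/-- The cocycle identity after `[0,t']` has shifted `⟨z,λ⟩` by `(i/d)·b` with `b = ⟨t',λ⟩`. -/
theorem chernPotential_cocycle {d : ℝ} {ζ : ℂ} (hζ : ζ.im = d / 2) (c b : ℂ) (r : ℝ) :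
    chernPotential d ζ c (r + b.re) - chernPotential d ζ (c + I * (d : ℂ)⁻¹ * b) r
        - chernPotential d ζ c b.re
      = ((-2 * d * r * b.im - 4 * r * b.re * ζ.re : ℝ) : ℂ) := by
  have hd : (d : ℂ) * d * (d : ℂ)⁻¹ = d := mul_self_mul_inv _
  have hb : b = b.re + b.im * I := (re_add_im b).symm
  have hζ' : ζ = ζ.re + (d / 2 : ℂ) * I := Complex.ext (by simp) (by simp [hζ])
  simp only [chernPotential]
  push_cast
  linear_combination (2 * I * b * r) * hd - (4 * r * b.re) * hζ' + (2 * I * r * d) * hb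
    + (2 * d * r * b.im) * I_sq

theorem chern_cocycle_general {V : Type*} [AddCommGroup V] [Module ℂ V]
    (B : V →ₗ[ℂ] V →ₛₗ[starRingEnd ℂ] ℂ)
    (hherm : ∀ v w : V, B w v = starRingEnd ℂ (B v w))
    (δ : ℂ) (hδre : δ.re = 0)
    (ℓ ℓ' : V) (hℓ : B ℓ ℓ = 0) (hℓℓ' : B ℓ ℓ' = δ⁻¹)
    (lam : V) (hlam : B lam ℓ = 0)
    (ζ : ℂ) (hζ : ζ.im = δ.im / 2)
    (A : V → V → ℂ)
    (hA : ∀ t z : V, A t z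
      = -2 * ((δ.im : ℂ)) ^ 2 * B z lam * ((B t lam).re : ℂ)
        - 2 * ((B t lam).re : ℂ) ^ 2 * ζ + ((B t lam).re : ℂ) * (ζ + 1))
    (t t' : V)
    (τ : ℂ) (σ : V) (hσℓ : B σ ℓ = 0) :
    A (t + t') (zcoord B δ ℓ ℓ' τ σ)
        - A t (heis B δ ℓ 0 t' (zcoord B δ ℓ ℓ' τ σ))
        - A t' (zcoord B δ ℓ ℓ' τ σ)
      = ((-2 * δ.im * (B t lam).re * (B t' lam).im
          - 4 * (B t lam).re * (B t' lam).re * ζ.re : ℝ) : ℂ) := by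
  have hA' : ∀ t z, A t z = chernPotential δ.im ζ (B z lam) (B t lam).re := hA
  have hℓlam : B ℓ lam = 0 := by rw [hherm, hlam, map_zero]
  rw [hA', hA', hA', heis_apply_left B hℓlam, zcoord_apply_ell B hℓ hσℓ,
    apply_swap_eq_I_mul_inv_im B hherm hδre hℓℓ', map_add, LinearMap.add_apply, add_re]
  exact chernPotential_cocycle hζ _ _ _

/-- Chern class cocycle of a local Heegner divisor: with
`A(t,z) = −2|δ|²⟨z,λ⟩Re⟨t,λ⟩ − 2(Re⟨t,λ⟩)²ζ + Re⟨t,λ⟩(ζ+1)` one has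
`A(t+t', z) − A(t, [0,t']z) − A(t', z)
  = −2|δ|·Re⟨t,λ⟩·Im⟨t',λ⟩ − 4·Re⟨t,λ⟩·Re⟨t',λ⟩·Re ζ`. -/
theorem chern_cocycle {V : Type*} [AddCommGroup V] [Module ℂ V]
    [FiniteDimensional ℂ V]
    (B : V →ₗ[ℂ] V →ₛₗ[starRingEnd ℂ] ℂ)
    (hherm : ∀ v w : V, B w v = starRingEnd ℂ (B v w))
    (δ : ℂ) (hδre : δ.re = 0) (hδim : 0 < δ.im)
    (ℓ ℓ' : V) (hℓ : B ℓ ℓ = 0) (hℓ' : B ℓ' ℓ' = 0) (hℓℓ' : B ℓ ℓ' = δ⁻¹)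
    (lam : V) (hlam : B lam ℓ = 0)
    (ζ : ℂ) (hζ : ζ.im = δ.im / 2)
    (A : V → V → ℂ)
    (hA : ∀ t z : V, A t z
      = -2 * ((δ.im : ℂ)) ^ 2 * B z lam * ((B t lam).re : ℂ)
        - 2 * ((B t lam).re : ℂ) ^ 2 * ζ + ((B t lam).re : ℂ) * (ζ + 1))
    (t t' : V) (htℓ : B t ℓ = 0) (htℓ' : B t ℓ' = 0)
    (ht'ℓ : B t' ℓ = 0) (ht'ℓ' : B t' ℓ' = 0)
    (τ : ℂ) (σ : V) (hσℓ : B σ ℓ = 0) (hσℓ' : B σ ℓ' = 0) :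
    A (t + t') (zcoord B δ ℓ ℓ' τ σ)
        - A t (heis B δ ℓ 0 t' (zcoord B δ ℓ ℓ' τ σ))
        - A t' (zcoord B δ ℓ ℓ' τ σ)
      = ((-2 * δ.im * (B t lam).re * (B t' lam).im
          - 4 * (B t lam).re * (B t' lam).re * ζ.re : ℝ) : ℂ) :=
  chern_cocycle_general B hherm δ hδre ℓ ℓ' hℓ hℓℓ' lam hlam ζ hζ A hA t t' τ σ hσℓ
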